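/- arXiv:2409.18490 — 2 statements merged into one kernel-verified Lean document; each statement's English description precedes it below -/
import Mathlib

section
/- Let U_ε ∈ C¹([0,T]; V_N) solve the semi-discrete FSG scheme for the fractional KdV equation. Then d/dt ∫_{−π}^{π} [ε² (D^{α/2} U_ε(x,t))² − 2 U_ε³(x,t)] dx = 0 (conservation of the energy invariant). -/
open scoped BigOperators

/-- L² inner product on [-π,π] expressed via Fourier coefficients (Parseval). -/
noncomputable def innerC (a b : ℤ → ℂ) : ℂ :=
  2 * Real.pi * ∑' k : ℤ, a k * (starRingEnd ℂ) (b k)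

/-- Periodic fractional Laplacian of order `α` as a Fourier multiplier `|k|^α`. -/
noncomputable def Dmul (α : ℝ) (a : ℤ → ℂ) : ℤ → ℂ :=
  fun k => ((((|k| : ℤ) : ℝ) ^ α : ℝ) : ℂ) * a k

/-- Spatial derivative as a Fourier multiplier `i k`. -/
noncomputable def Dx (a : ℤ → ℂ) : ℤ → ℂ := fun k => Complex.I * (k : ℂ) * a k

/-- Fourier coefficients of a product: discrete convolution. -/
noncomputable def convC (a b : ℤ → ℂ) : ℤ → ℂ := fun m => ∑' k : ℤ, a k * b (m - k)

/-- Fourier truncation to modes `|k| ≤ N`. -/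
def PN (N : ℕ) (a : ℤ → ℂ) : ℤ → ℂ := fun k => if |k| ≤ (N : ℤ) then a k else 0

/-- Membership in the space `V_N` of trigonometric polynomials of degree `N`. -/
def inVN (N : ℕ) (a : ℤ → ℂ) : Prop := ∀ k : ℤ, (N : ℤ) < |k| → a k = 0

/-- Square of the periodic Sobolev `H^r` norm. -/
noncomputable def sobSq (r : ℝ) (a : ℤ → ℂ) : ℝ :=
  ∑' k : ℤ, (1 + ((|k| : ℤ) : ℝ) ^ 2) ^ r * ‖a k‖ ^ 2

/-- Membership in the periodic Sobolev space `H^r_p`. -/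
def MemHr (r : ℝ) (a : ℤ → ℂ) : Prop :=
  Summable fun k : ℤ => (1 + ((|k| : ℤ) : ℝ) ^ 2) ^ r * ‖a k‖ ^ 2

/-- The `L²` norm on `[-π,π]` via Parseval. -/
noncomputable def normL2 (a : ℤ → ℂ) : ℝ :=
  Real.sqrt (2 * Real.pi * ∑' k : ℤ, ‖a k‖ ^ 2)

/-- Real-valuedness of the underlying function. -/
def RealCoeffs (a : ℤ → ℂ) : Prop := ∀ k : ℤ, a (-k) = (starRingEnd ℂ) (a k)

/-! On the modes `|k| ≤ N` the scheme says `u_t = ∂ₓ g` with `g = ε² D^α u − 3u²`, and `g` is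
(half) the `L²` gradient of the energy `E = ∫ ε² (D^{α/2}u)² − 2u³`. Hence
`dE/dt = 2 ⟨u_t, g⟩ = 2 ⟨∂ₓ g, g⟩ = 0`, since `∂ₓ` is skew-adjoint: in Fourier variables each
mode contributes `Re (i k |ĝ_k|²) = 0`. To differentiate the cubic term one writes `∫ u³` as a
trilinear form that is symmetric in its three arguments, and uses that `u` is real, so that
`(u²)^(-j) = conj (u²)^(j)`. -/

open ComplexConjugate

noncomputable def modes (N : ℕ) : Finset ℤ := Finset.Icc (-(N : ℤ)) N

@[simp]
lemma mem_modes {N : ℕ} {k : ℤ} : k ∈ modes N ↔ |k| ≤ N := by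
  rw [modes, Finset.mem_Icc, abs_le]

namespace inVN

variable {N : ℕ} {a : ℤ → ℂ}

lemma eq_zero_of_notMem (ha : inVN N a) {k : ℤ} (hk : k ∉ modes N) : a k = 0 :=
  ha k (by simpa using hk)

lemma Dx (ha : inVN N a) : inVN N (Dx a) := fun k hk => by
  rw [_root_.Dx, ha k hk, mul_zero]

lemma deriv {c : ℝ → ℤ → ℂ} (hc : ∀ s, inVN N (c s)) (t : ℝ) :
    inVN N fun k => deriv (fun s => c s k) t := fun k hk => by
  simp only [hc _ k hk, deriv_const]

end inVN

lemma convC_eq_sum {N : ℕ} {a : ℤ → ℂ} (ha : inVN N a) (b : ℤ → ℂ) (m : ℤ) :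
    convC a b m = ∑ k ∈ modes N, a k * b (m - k) :=
  tsum_eq_sum fun k hk => by rw [ha.eq_zero_of_notMem hk, zero_mul]

lemma convC_comm (a b : ℤ → ℂ) : convC a b = convC b a := by
  ext m
  rw [convC, convC, ← (Equiv.subLeft m).tsum_eq]
  simp [mul_comm]

lemma Dx_convC {N : ℕ} {a : ℤ → ℂ} (ha : inVN N a) (b : ℤ → ℂ) (m : ℤ) :
    Dx (convC a b) m = convC (Dx a) b m + convC a (Dx b) m := by
  rw [Dx, convC_eq_sum ha, convC_eq_sum ha.Dx, convC_eq_sum ha, Finset.mul_sum,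
    ← Finset.sum_add_distrib]
  refine Finset.sum_congr rfl fun k _ => ?_
  simp only [Dx]
  push_cast
  ring

lemma Dx_convC_self {N : ℕ} {a : ℤ → ℂ} (ha : inVN N a) (m : ℤ) :
    Dx (convC a a) m = 2 * convC a (Dx a) m := by
  rw [Dx_convC ha, convC_comm (Dx a)]
  ring

lemma RealCoeffs.convC_neg {a b : ℤ → ℂ} (ha : RealCoeffs a) (hb : RealCoeffs b) (m : ℤ) :
    convC a b (-m) = conj (convC a b m) := by
  rw [convC, convC, Complex.conj_tsum, ← (Equiv.neg ℤ).tsum_eq]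
  refine tsum_congr fun k => ?_
  rw [Equiv.neg_apply, ha, show -m - -k = -(m - k) by ring, hb, map_mul]

lemma innerC_single (F : ℤ → ℂ) (j : ℤ) : innerC F (Pi.single j 1) = 2 * Real.pi * F j := by
  rw [innerC, tsum_eq_single j fun k hk => by simp [hk]]
  simp

lemma eq_zero_of_forall_innerC_eq_zero {N : ℕ} {F : ℤ → ℂ}
    (hF : ∀ φ, inVN N φ → innerC F φ = 0) {j : ℤ} (hj : j ∈ modes N) : F j = 0 := by
  have hsingle : inVN N (Pi.single j 1) := fun k hk => by
    rw [Pi.single_apply, if_neg]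
    rintro rfl
    exact (mem_modes.mp hj).not_gt hk
  have := hF _ hsingle
  rw [innerC_single] at this
  simpa [Real.pi_ne_zero] using this

/-- `∫ u v w = 2π · tripleC û v̂ ŵ` (the `l`-index of `ŵ` is forced to `-j-k`). -/
noncomputable def tripleC (a b d : ℤ → ℂ) : ℂ :=
  ∑' p : ℤ × ℤ, a p.1 * b p.2 * d (-p.1 - p.2)

lemma tripleC_comm_left (a b d : ℤ → ℂ) : tripleC a b d = tripleC b a d := by
  rw [tripleC, tripleC, ← (Equiv.prodComm ℤ ℤ).tsum_eq]
  refine tsum_congr fun p => ?_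
  simp only [Equiv.prodComm_apply, Prod.fst_swap, Prod.snd_swap]
  rw [neg_sub_comm, mul_comm (a _)]

lemma tripleC_comm_outer (a b d : ℤ → ℂ) : tripleC a b d = tripleC d b a := by
  have hflip : Function.Involutive fun p : ℤ × ℤ => (-p.1 - p.2, p.2) := fun p => by
    ext <;> simp
  rw [tripleC, tripleC, ← hflip.toPerm.tsum_eq]
  refine tsum_congr fun p => ?_
  simp only [Function.Involutive.coe_toPerm]
  rw [show -(-p.1 - p.2) - p.2 = p.1 by ring]
  ring

lemma tripleC_eq_sum {N : ℕ} {a b : ℤ → ℂ} (ha : inVN N a) (hb : inVN N b) (d : ℤ → ℂ) :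
    tripleC a b d = ∑ p ∈ modes N ×ˢ modes N, a p.1 * b p.2 * d (-p.1 - p.2) := by
  refine tsum_eq_sum fun p hp => ?_
  rcases not_and_or.mp (Finset.mem_product.not.mp hp) with h | h
  · rw [ha.eq_zero_of_notMem h, zero_mul, zero_mul]
  · rw [hb.eq_zero_of_notMem h, mul_zero, zero_mul]

lemma convC_convC_zero {N : ℕ} {a b : ℤ → ℂ} (ha : inVN N a) (hb : inVN N b) (d : ℤ → ℂ) :
    convC a (convC b d) 0 = tripleC a b d := by
  rw [tripleC_eq_sum ha hb, Finset.sum_product, convC_eq_sum ha]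
  refine Finset.sum_congr rfl fun j _ => ?_
  rw [convC_eq_sum hb, Finset.mul_sum]
  refine Finset.sum_congr rfl fun k _ => ?_
  rw [zero_sub, mul_assoc]

lemma hasDerivAt_tripleC_self {N : ℕ} {c : ℝ → ℤ → ℂ} (hc : ∀ s, inVN N (c s))
    {c' : ℤ → ℂ} (hc' : inVN N c') {t : ℝ} (hderiv : ∀ k, HasDerivAt (fun s => c s k) (c' k) t) :
    HasDerivAt (fun s => tripleC (c s) (c s) (c s)) (3 * tripleC c' (c t) (c t)) t := by
  simp_rw [tripleC_eq_sum (hc _) (hc _)]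
  refine (HasDerivAt.fun_sum fun (p : ℤ × ℤ) _ =>
    ((hderiv p.1).mul (hderiv p.2)).mul (hderiv (-p.1 - p.2))).congr_deriv ?_
  have hsymm : 3 * tripleC c' (c t) (c t)
      = tripleC c' (c t) (c t) + tripleC (c t) c' (c t) + tripleC (c t) (c t) c' := by
    rw [tripleC_comm_left (c t) c', ← tripleC_comm_outer]
    ring
  rw [hsymm, tripleC_eq_sum hc' (hc t), tripleC_eq_sum (hc t) hc', tripleC_eq_sum (hc t) (hc t),
    ← Finset.sum_add_distrib, ← Finset.sum_add_distrib]
  refine Finset.sum_congr rfl fun p _ => ?_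
  simp only [Pi.mul_apply]
  ring

/-- `∫ ε² (D^{α/2}u)² − 2u³ = 2π · energy α ε û` by Parseval. -/
noncomputable def energy (α ε : ℝ) (a : ℤ → ℂ) : ℝ :=
  ε ^ 2 * ∑' k : ℤ, ((|k| : ℤ) : ℝ) ^ α * ‖a k‖ ^ 2 - 2 * (convC a (convC a a) 0).re

/-- The coefficients of `ε² D^α u − 3u²`; the paper's test function is `φ = -energyGrad`. -/
noncomputable def energyGrad (α ε : ℝ) (a : ℤ → ℂ) : ℤ → ℂ :=
  fun k => ((ε ^ 2 : ℝ) : ℂ) * Dmul α a k - 3 * convC a a k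

section EnergyDerivative

variable {N : ℕ} {c : ℝ → ℤ → ℂ} {c' : ℤ → ℂ} {t : ℝ}

lemma hasDerivAt_weighted_sum_normSq (hc : ∀ s, inVN N (c s))
    (hderiv : ∀ k, HasDerivAt (fun s => c s k) (c' k) t) (w : ℤ → ℝ) :
    HasDerivAt (fun s => ∑' k, w k * ‖c s k‖ ^ 2)
      (∑ k ∈ modes N, w k * (2 * (c' k * conj (c t k)).re)) t := by
  have hfin : ∀ s, ∑' k, w k * ‖c s k‖ ^ 2 = ∑ k ∈ modes N, w k * ‖c s k‖ ^ 2 := fun s =>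
    tsum_eq_sum fun k hk => by simp [(hc s).eq_zero_of_notMem hk]
  simp_rw [hfin, ← Complex.inner]
  exact HasDerivAt.fun_sum fun k _ => (hderiv k).norm_sq.const_mul (w k)

lemma hasDerivAt_re_cubic (hc : ∀ s, inVN N (c s)) (hreal : RealCoeffs (c t)) (hc' : inVN N c')
    (hderiv : ∀ k, HasDerivAt (fun s => c s k) (c' k) t) :
    HasDerivAt (fun s => (convC (c s) (convC (c s) (c s)) 0).re)
      (3 * ∑ j ∈ modes N, (c' j * conj (convC (c t) (c t) j)).re) t := by
  simp_rw [convC_convC_zero (hc _) (hc _)]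
  refine (Complex.reCLM.hasFDerivAt.comp_hasDerivAt t
    (hasDerivAt_tripleC_self hc hc' hderiv)).congr_deriv ?_
  rw [Complex.reCLM_apply, ← convC_convC_zero hc' (hc t), convC_eq_sum hc', ← Complex.re_sum,
    ← Complex.re_ofReal_mul]
  simp_rw [zero_sub, hreal.convC_neg hreal]
  push_cast
  rfl

lemma hasDerivAt_energy (α ε : ℝ) (hc : ∀ s, inVN N (c s)) (hreal : RealCoeffs (c t))
    (hc' : inVN N c') (hderiv : ∀ k, HasDerivAt (fun s => c s k) (c' k) t) :
    HasDerivAt (fun s => energy α ε (c s))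
      (2 * ∑ j ∈ modes N, (c' j * conj (energyGrad α ε (c t) j)).re) t := by
  refine (((hasDerivAt_weighted_sum_normSq hc hderiv _).const_mul (ε ^ 2)).sub
    ((hasDerivAt_re_cubic hc hreal hc' hderiv).const_mul 2)).congr_deriv ?_
  simp only [Finset.mul_sum, ← Finset.sum_sub_distrib]
  refine Finset.sum_congr rfl fun j _ => ?_
  simp only [energyGrad, Dmul, map_sub, map_mul, Complex.conj_ofReal, map_ofNat, mul_sub,
    Complex.sub_re]
  rw [mul_left_comm (c' j), mul_left_comm (c' j), mul_left_comm (c' j) 3, Complex.re_ofReal_mul,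
    Complex.re_ofReal_mul]
  simp only [Complex.mul_re (3 : ℂ), Complex.re_ofNat, Complex.im_ofNat]
  ring

end EnergyDerivative

lemma re_Dx_mul_conj_eq_zero (g : ℤ → ℂ) (j : ℤ) : (Dx g j * conj (g j)).re = 0 := by
  rw [Dx, mul_assoc, Complex.mul_conj]
  simp

lemma eq_Dx_energyGrad_of_galerkin {N : ℕ} {α ε : ℝ} {a d : ℤ → ℂ} (ha : inVN N a)
    (hscheme : ∀ φ, inVN N φ →
      innerC (fun k => d k + 6 * convC a (Dx a) k - ((ε ^ 2 : ℝ) : ℂ) * Dmul α (Dx a) k) φ = 0)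
    {j : ℤ} (hj : j ∈ modes N) : d j = Dx (energyGrad α ε a) j := by
  have hmode := eq_zero_of_forall_innerC_eq_zero hscheme hj
  have hproduct := Dx_convC_self ha j
  simp only [Dx, Dmul, energyGrad] at hmode hproduct ⊢
  linear_combination hmode + 3 * hproduct

theorem stmt11_general (N : ℕ) (α ε T : ℝ)
    (c : ℝ → ℤ → ℂ)
    (hVN : ∀ t, inVN N (c t))
    (hreal : ∀ t, RealCoeffs (c t))
    (hdiff : ∀ (k : ℤ) (t : ℝ), DifferentiableAt ℝ (fun s => c s k) t)
    (hscheme : ∀ t ∈ Set.Icc (0 : ℝ) T, ∀ φ : ℤ → ℂ, inVN N φ →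
      innerC (fun k => deriv (fun s => c s k) t + 6 * convC (c t) (Dx (c t)) k
        - ((ε ^ 2 : ℝ) : ℂ) * Dmul α (Dx (c t)) k) φ = 0) :
    ∀ t ∈ Set.Icc (0 : ℝ) T,
      deriv (fun s => 2 * Real.pi *
        (ε ^ 2 * ∑' k : ℤ, ((|k| : ℤ) : ℝ) ^ α * ‖c s k‖ ^ 2
          - 2 * (convC (c s) (convC (c s) (c s)) 0).re)) t = 0 := by
  intro t ht
  have hode : ∀ j ∈ modes N, deriv (fun s => c s j) t = Dx (energyGrad α ε (c t)) j :=
    fun j hj => eq_Dx_energyGrad_of_galerkin (hVN t) (hscheme t ht) hj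
  have hE := (hasDerivAt_energy α ε hVN (hreal t) (inVN.deriv hVN t)
    fun k => (hdiff k t).hasDerivAt).const_mul (2 * Real.pi)
  change deriv (fun s => 2 * Real.pi * energy α ε (c s)) t = 0
  rw [hE.deriv, Finset.sum_eq_zero fun j hj => by rw [hode j hj, re_Dx_mul_conj_eq_zero]]
  simp

/-- Conservation of the energy invariant
`d/dt ∫ [ε² (D^{α/2} U_ε)² − 2 U_ε³] dx = 0` for the semi-discrete FSG scheme,
expressed via Parseval: `∫ (D^{α/2}U)² = 2π Σ |k|^α |ĉ(k)|²` and
`∫ U³ = 2π (ĉ⋆ĉ⋆ĉ)(0)`. -/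
theorem stmt11 (N : ℕ) (α ε T : ℝ) (hα1 : 1 ≤ α) (hα2 : α ≤ 2) (hT : 0 < T)
    (c : ℝ → ℤ → ℂ)
    (hVN : ∀ t, inVN N (c t))
    (hreal : ∀ t, RealCoeffs (c t))
    (hdiff : ∀ (k : ℤ) (t : ℝ), DifferentiableAt ℝ (fun s => c s k) t)
    (hscheme : ∀ t ∈ Set.Icc (0 : ℝ) T, ∀ φ : ℤ → ℂ, inVN N φ →
      innerC (fun k => deriv (fun s => c s k) t + 6 * convC (c t) (Dx (c t)) k
        - ((ε ^ 2 : ℝ) : ℂ) * Dmul α (Dx (c t)) k) φ = 0) :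
    ∀ t ∈ Set.Icc (0 : ℝ) T,
      deriv (fun s => 2 * Real.pi *
        (ε ^ 2 * ∑' k : ℤ, ((|k| : ℤ) : ℝ) ^ α * ‖c s k‖ ^ 2
          - 2 * (convC (c s) (convC (c s) (c s)) 0).re)) t = 0 :=
  stmt11_general N α ε T c hVN hreal hdiff hscheme
end

section
/- Let U_ε^{n+1} ∈ V_N satisfy the Crank–Nicolson FSG step: for all φ ∈ V_N, (U_ε^{n+1}, φ) = (U_ε^n, φ) − 6Δt (U_ε^{n+1/2}(U_ε^{n+1/2})_x, φ) + ε²Δt (D^α (U_ε^{n+1/2})_x, φ), where U_ε^{n+1/2} = (U_ε^n + U_ε^{n+1})/2. Then ‖U_ε^{n+1}‖_{L²} = ‖U_ε^n‖_{L²}. -/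
open scoped BigOperators

/-
Testing the step with `φ = w := (Uⁿ + Uⁿ⁺¹)/2` kills both right-hand terms. The dispersive term
`(D^α w_x, w)` vanishes because its Fourier summand `i k |k|^α |w_k|²` is odd in `k`. The nonlinear
term `(w w_x, w)` becomes `i ∑ k₂ w_{k₁} w_{k₂} w_{k₃}` over `k₁ + k₂ + k₃ = 0`; the product is
invariant under cyclic permutation of `(k₁, k₂, k₃)`, so the sum is a third of the same sum with
weight `k₁ + k₂ + k₃ = 0`. What remains is `(Uⁿ⁺¹ - Uⁿ, Uⁿ⁺¹ + Uⁿ) = 0`, and for real-valued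
functions the cross terms cancel, leaving `‖Uⁿ⁺¹‖² = ‖Uⁿ‖²`.
-/

lemma inVN.eq_zero_of_notMem_s12 {N : ℕ} {a : ℤ → ℂ} (ha : inVN N a) {k : ℤ}
    (hk : k ∉ Finset.Icc (-(N : ℤ)) N) : a k = 0 := by
  refine ha k ?_
  rw [Finset.mem_Icc, not_and_or, not_le, not_le] at hk
  rcases hk with hk | hk
  · exact lt_abs.mpr (Or.inr (by omega))
  · exact lt_abs.mpr (Or.inl hk)

lemma inVN.summable_mul {N : ℕ} {a : ℤ → ℂ} (ha : inVN N a) (b : ℤ → ℂ) :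
    Summable fun k => a k * b k :=
  summable_of_ne_finset_zero fun _ hk => by rw [ha.eq_zero_of_notMem_s12 hk, zero_mul]

lemma inVN.summable_of_fst_snd {N : ℕ} {a : ℤ → ℂ} (ha : inVN N a) {f : ℤ × ℤ → ℂ}
    (hf : ∀ p : ℤ × ℤ, a p.1 = 0 ∨ a p.2 = 0 → f p = 0) : Summable f :=
  summable_of_ne_finset_zero (s := Finset.Icc (-(N : ℤ)) N ×ˢ Finset.Icc (-(N : ℤ)) N)
    fun p hp => hf p <| by
      rw [Finset.mem_product, not_and_or] at hp
      exact hp.imp ha.eq_zero_of_notMem_s12 ha.eq_zero_of_notMem_s12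

lemma tsum_eq_zero_of_odd {f : ℤ → ℂ} (hf : ∀ k, f (-k) = -f k) : ∑' k, f k = 0 := by
  have h : ∑' k, f k = -∑' k, f k := by
    rw [← tsum_neg, ← (Equiv.neg ℤ).tsum_eq f]
    exact tsum_congr fun k => hf k
  linear_combination h / 2

lemma innerC_self (a : ℤ → ℂ) : innerC a a = ((normL2 a ^ 2 : ℝ) : ℂ) := by
  have hnonneg : 0 ≤ 2 * Real.pi * ∑' k : ℤ, ‖a k‖ ^ 2 := by positivity
  rw [normL2, Real.sq_sqrt hnonneg, innerC, Complex.ofReal_mul, Complex.ofReal_tsum]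
  push_cast
  congr 1
  exact tsum_congr fun k => by rw [Complex.mul_conj, Complex.normSq_eq_norm_sq]; push_cast; rfl

lemma innerC_comm {a b : ℤ → ℂ} (ha : RealCoeffs a) (hb : RealCoeffs b) :
    innerC a b = innerC b a := by
  unfold innerC
  rw [← (Equiv.neg ℤ).tsum_eq fun k => a k * (starRingEnd ℂ) (b k)]
  congr 1
  refine tsum_congr fun k => ?_
  simp only [Equiv.neg_apply, ha k, hb k, Complex.conj_conj]
  ring

lemma innerC_midpoint_right {N : ℕ} {a : ℤ → ℂ} (ha : inVN N a) (b c : ℤ → ℂ) :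
    innerC a (fun k => (b k + c k) / 2) = (innerC a b + innerC a c) / 2 := by
  unfold innerC
  have hsplit : ∀ k, a k * (starRingEnd ℂ) ((b k + c k) / 2)
      = (a k * (starRingEnd ℂ) (b k) + a k * (starRingEnd ℂ) (c k)) / 2 := fun k => by
    rw [map_div₀, map_add, map_ofNat]; ring
  rw [tsum_congr hsplit, tsum_div_const,
    (ha.summable_mul _).tsum_add (ha.summable_mul _)]
  ring

lemma innerC_Dmul_Dx_self (α : ℝ) {w : ℤ → ℂ} (hw : RealCoeffs w) :
    innerC (Dmul α (Dx w)) w = 0 := by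
  have hodd : ∑' k : ℤ, Dmul α (Dx w) k * (starRingEnd ℂ) (w k) = 0 :=
    tsum_eq_zero_of_odd fun k => by
      simp only [Dmul, Dx, abs_neg, hw k, Complex.conj_conj, Int.cast_neg]
      ring
  rw [innerC, hodd, mul_zero]

/-- The cyclic shift `(k₁, k₂, k₃) ↦ (k₂, k₃, k₁)` of integer triples with `k₁ + k₂ + k₃ = 0`,
each triple recorded by its first two entries. -/
def rotateZeroSumTriple : ℤ × ℤ ≃ ℤ × ℤ where
  toFun p := (p.2, -p.1 - p.2)
  invFun p := (-p.1 - p.2, p.1)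
  left_inv p := Prod.ext (by dsimp only; ring) rfl
  right_inv p := Prod.ext rfl (by dsimp only; ring)

lemma tsum_snd_mul_zeroSumTriple_eq_zero {w : ℤ → ℂ}
    (hs : Summable fun p : ℤ × ℤ => (p.2 : ℂ) * (w p.1 * w p.2 * w (-p.1 - p.2))) :
    ∑' p : ℤ × ℤ, (p.2 : ℂ) * (w p.1 * w p.2 * w (-p.1 - p.2)) = 0 := by
  set e := rotateZeroSumTriple
  set P : ℤ × ℤ → ℂ := fun p => w p.1 * w p.2 * w (-p.1 - p.2)
  change Summable fun p : ℤ × ℤ => (p.2 : ℂ) * P p at hs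
  change ∑' p, (p.2 : ℂ) * P p = 0
  have hP : ∀ p, P (e p) = P p := fun p => by
    simp only [P, e, rotateZeroSumTriple, Equiv.coe_fn_mk]
    rw [show -p.2 - (-p.1 - p.2) = p.1 by ring]
    ring
  have h12 : ∑' p, (p.1 : ℂ) * P p = ∑' p, (p.2 : ℂ) * P p := by
    rw [← e.tsum_eq]; exact tsum_congr fun p => by rw [hP]; rfl
  have h23 : ∑' p, (p.2 : ℂ) * P p = ∑' p, ((-p.1 - p.2 : ℤ) : ℂ) * P p := by
    rw [← e.tsum_eq]; exact tsum_congr fun p => by rw [hP]; rfl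
  have hs1 : Summable fun p : ℤ × ℤ => (p.1 : ℂ) * P p :=
    e.summable_iff.mp (hs.congr fun p => by rw [Function.comp_apply, hP]; rfl)
  have h3 : ∑' p, ((-p.1 - p.2 : ℤ) : ℂ) * P p
      = -∑' p, (p.1 : ℂ) * P p - ∑' p, (p.2 : ℂ) * P p := by
    rw [← tsum_neg, ← hs1.neg.tsum_sub hs]
    exact tsum_congr fun p => by push_cast; ring
  linear_combination h23 / 3 + h3 / 3 - h12 / 3

lemma innerC_convC_Dx_self {N : ℕ} {w : ℤ → ℂ} (hN : inVN N w) (hw : RealCoeffs w) :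
    innerC (convC w (Dx w)) w = 0 := by
  set G : ℤ × ℤ → ℂ := fun q => (q.2 : ℂ) * (w q.1 * w q.2 * w (-q.1 - q.2))
  -- `e (m, k) = (k, m - k)`: the convolution pairs the modes `k`, `m - k` and `-m`
  let e : ℤ × ℤ ≃ ℤ × ℤ :=
    (Equiv.prodComm ℤ ℤ).trans (Equiv.prodShear (Equiv.refl ℤ) Equiv.subRight)
  have hG : Summable G :=
    hN.summable_of_fst_snd fun q hq => by rcases hq with h | h <;> simp [G, h]
  have hGe : Summable fun p => Complex.I * G (e p) := (e.summable_iff.mpr hG).mul_left _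
  have hterm : ∀ m, convC w (Dx w) m * (starRingEnd ℂ) (w m)
      = ∑' k, Complex.I * G (e (m, k)) := fun m => by
    rw [convC, ← tsum_mul_right]
    refine tsum_congr fun k => ?_
    simp only [G, e, Dx, Int.cast_sub, ← hw m, Equiv.trans_apply, Equiv.prodComm_apply,
      Prod.swap_prod_mk, Equiv.prodShear_apply, Equiv.refl_apply, Equiv.subRight_apply]
    rw [show -k - (m - k) = -m by ring]
    ring
  calc innerC (convC w (Dx w)) w
      = 2 * Real.pi * ∑' m, ∑' k, Complex.I * G (e (m, k)) := by
        rw [innerC, tsum_congr hterm]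
    _ = 2 * Real.pi * (Complex.I * ∑' p, G (e p)) := by
        rw [← hGe.tsum_prod' hGe.prod_factor, tsum_mul_left]
    _ = 0 := by
        rw [e.tsum_eq G, tsum_snd_mul_zeroSumTriple_eq_zero hG, mul_zero, mul_zero]

lemma normL2_eq_of_innerC_midpoint_eq {N : ℕ} {u v : ℤ → ℂ} (hu : inVN N u) (hv : inVN N v)
    (hur : RealCoeffs u) (hvr : RealCoeffs v)
    (h : innerC v (fun k => (u k + v k) / 2) = innerC u (fun k => (u k + v k) / 2)) :
    normL2 v = normL2 u := by
  rw [innerC_midpoint_right hv, innerC_midpoint_right hu, innerC_comm hvr hur] at h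
  have hsq : ((normL2 v ^ 2 : ℝ) : ℂ) = ((normL2 u ^ 2 : ℝ) : ℂ) := by
    rw [← innerC_self, ← innerC_self]
    linear_combination 2 * h
  exact (pow_left_inj₀ (Real.sqrt_nonneg _) (Real.sqrt_nonneg _) two_ne_zero).mp
    (Complex.ofReal_injective hsq)

theorem stmt12_general (N : ℕ) (α ε Δt : ℝ)
    (un un1 : ℤ → ℂ) (hun : inVN N un) (hun1 : inVN N un1)
    (hrealn : RealCoeffs un) (hrealn1 : RealCoeffs un1)
    (hstep : ∀ φ : ℤ → ℂ, inVN N φ →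
      innerC un1 φ = innerC un φ
        - 6 * Δt * innerC (convC (fun k => (un k + un1 k) / 2)
            (Dx (fun k => (un k + un1 k) / 2))) φ
        + ((ε ^ 2 * Δt : ℝ) : ℂ) *
            innerC (Dmul α (Dx (fun k => (un k + un1 k) / 2))) φ) :
    normL2 un1 = normL2 un := by
  set w : ℤ → ℂ := fun k => (un k + un1 k) / 2
  have hwN : inVN N w := fun k hk => by simp [w, hun k hk, hun1 k hk]
  have hwR : RealCoeffs w := fun k => by
    simp only [w, hrealn k, hrealn1 k, map_div₀, map_add, map_ofNat]
  refine normL2_eq_of_innerC_midpoint_eq hun hun1 hrealn hrealn1 ?_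
  rw [hstep w hwN, innerC_convC_Dx_self hwN hwR, innerC_Dmul_Dx_self α hwR]
  ring

/-- The Crank–Nicolson fully discrete FSG step conserves the `L²` norm:
`‖U_ε^{n+1}‖ = ‖U_ε^n‖`. -/
theorem stmt12 (N : ℕ) (α ε Δt : ℝ) (hα1 : 1 ≤ α) (hα2 : α ≤ 2) (hΔt : 0 < Δt)
    (un un1 : ℤ → ℂ) (hun : inVN N un) (hun1 : inVN N un1)
    (hrealn : RealCoeffs un) (hrealn1 : RealCoeffs un1)
    (hstep : ∀ φ : ℤ → ℂ, inVN N φ →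
      innerC un1 φ = innerC un φ
        - 6 * Δt * innerC (convC (fun k => (un k + un1 k) / 2)
            (Dx (fun k => (un k + un1 k) / 2))) φ
        + ((ε ^ 2 * Δt : ℝ) : ℂ) *
            innerC (Dmul α (Dx (fun k => (un k + un1 k) / 2))) φ) :
    normL2 un1 = normL2 un :=
  stmt12_general N α ε Δt un un1 hun hun1 hrealn hrealn1 hstep
end
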